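/- The Adjacent Hindman Theorem for a+2 colors implies that every sequence α : ℕ → Fin (a+2) has a highest letter occurring infinitely often: given α, define D : ℕ → Fin (a+2) on positive naturals by D(n) = max{α(k) : λ(n) ≤ k ≤ μ(n)}. If h is a strictly increasing apart sequence whose adjacent sums are all D-colored m, then m is a value of α attained infinitely often, and every value of α attained infinitely often is ≤ m. -/

import Mathlib

/-- λ(n): the 2-adic valuation of n (least exponent in binary expansion). -/
def lam (n : ℕ) : ℕ := padicValNat 2 n

/-- μ(n): ⌊log₂ n⌋ (greatest exponent in binary expansion). -/
def mu (n : ℕ) : ℕ := Nat.log 2 n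

/-- Apartness condition for a sequence. -/
def Apart (h : ℕ → ℕ) : Prop := ∀ i j, i < j → mu (h i) < lam (h j)

/-- Sum of adjacent elements h i + h (i+1) + ... + h j. -/
def adjSum (h : ℕ → ℕ) (i j : ℕ) : ℕ := ∑ t ∈ Finset.Icc i j, h t

/-!
Apartness makes `λ` and `μ` of an adjacent sum `h i + ⋯ + h j` equal to `λ (h i)` and `μ (h j)`,
so the `D`-colour of that sum is the largest letter of `α` on the window `[λ (h i), μ (h j)]`.
Since `λ (h i) ≥ i`, the windows `[λ (h n), μ (h n)]` move off to infinity, and each one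
contains a position with letter `m`. Conversely every `k ≥ λ (h 0)` lies in the window
`[λ (h 0), μ (h k)]`, whose largest letter is `m`, so `α k ≤ m`.
-/

lemma lam_le_mu {n : ℕ} (hn : n ≠ 0) : lam n ≤ mu n :=
  Nat.le_log_of_pow_le one_lt_two (Nat.le_of_dvd (Nat.pos_of_ne_zero hn) pow_padicValNat_dvd)

lemma lam_add_of_pow_dvd {a b : ℕ} (ha : a ≠ 0) (hb : 2 ^ (lam a + 1) ∣ b) :
    lam (a + b) = lam a := by
  have hab : a + b ≠ 0 := by omega
  have hb' : 2 ^ lam a ∣ b := (pow_dvd_pow 2 (Nat.le_succ _)).trans hb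
  apply le_antisymm
  · by_contra! hlt
    have hdvd : 2 ^ (lam a + 1) ∣ a + b := (pow_dvd_pow 2 hlt).trans pow_padicValNat_dvd
    exact pow_succ_padicValNat_not_dvd ha ((Nat.dvd_add_left hb).mp hdvd)
  · exact (padicValNat_dvd_iff_le hab).mp (dvd_add pow_padicValNat_dvd hb')

lemma mu_add_of_lt_pow_lam {a b : ℕ} (hb : b ≠ 0) (ha : a < 2 ^ lam b) :
    mu (a + b) = mu b := by
  apply Nat.log_eq_of_pow_le_of_lt_pow
  · exact (Nat.pow_log_le_self 2 hb).trans (Nat.le_add_left b a)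
  · have hlt : b < 2 ^ (mu b + 1) := Nat.lt_pow_succ_log_self one_lt_two b
    -- `b` and `2 ^ (μ b + 1)` are both multiples of `2 ^ λ b`, so they are at least that far apart
    have hdvd : 2 ^ lam b ∣ 2 ^ (mu b + 1) - b :=
      Nat.dvd_sub (pow_dvd_pow 2 (by have := lam_le_mu hb; omega)) pow_padicValNat_dvd
    have := Nat.le_of_dvd (by omega) hdvd
    omega

lemma adjSum_succ_right (h : ℕ → ℕ) {i j : ℕ} (hij : i ≤ j + 1) :
    adjSum h i (j + 1) = adjSum h i j + h (j + 1) :=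
  Finset.sum_Icc_succ_top hij h

lemma adjSum_pos {h : ℕ → ℕ} (hpos : ∀ i, 0 < h i) {i j : ℕ} (hij : i ≤ j) :
    0 < adjSum h i j :=
  Finset.sum_pos (fun t _ => hpos t) (Finset.nonempty_Icc.mpr hij)

namespace Apart

variable {h : ℕ → ℕ} (hap : Apart h) (hpos : ∀ i, 0 < h i)
include hap hpos

lemma strictMono_lam : StrictMono (fun i => lam (h i)) :=
  strictMono_nat_of_lt_succ fun i =>
    (lam_le_mu (hpos i).ne').trans_lt (hap i (i + 1) (Nat.lt_succ_self i))

lemma le_lam (i : ℕ) : i ≤ lam (h i) :=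
  (hap.strictMono_lam hpos).id_le i

lemma lam_adjSum {i j : ℕ} (hij : i ≤ j) : lam (adjSum h i j) = lam (h i) := by
  induction j, hij using Nat.le_induction with
  | base => simp [adjSum]
  | succ j hij ih =>
    have hgap : lam (adjSum h i j) + 1 ≤ lam (h (j + 1)) :=
      ih ▸ (lam_le_mu (hpos i).ne').trans_lt (hap i (j + 1) (by omega))
    rw [adjSum_succ_right h (by omega),
      lam_add_of_pow_dvd (adjSum_pos hpos hij).ne' ((pow_dvd_pow 2 hgap).trans pow_padicValNat_dvd), ih]

lemma mu_adjSum {i j : ℕ} (hij : i ≤ j) : mu (adjSum h i j) = mu (h j) := by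
  induction j, hij using Nat.le_induction with
  | base => simp [adjSum]
  | succ j hij ih =>
    rw [adjSum_succ_right h (by omega), mu_add_of_lt_pow_lam (hpos _).ne']
    calc adjSum h i j < 2 ^ (mu (adjSum h i j) + 1) := Nat.lt_pow_succ_log_self one_lt_two _
      _ ≤ 2 ^ lam (h (j + 1)) := Nat.pow_le_pow_right two_pos (ih ▸ hap j (j + 1) (by omega))

end Apart

theorem aht_gives_highest_letter_general (a : ℕ) (α : ℕ → Fin (a + 2))
    (D : ℕ → Fin (a + 2))
    (hD : ∀ n, D n = (Finset.Icc (lam n) (mu n)).sup α)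
    (h : ℕ → ℕ) (hpos : ∀ i, 0 < h i) (hap : Apart h)
    (m : Fin (a + 2)) (hhom : ∀ i j, i ≤ j → D (adjSum h i j) = m) :
    {k | α k = m}.Infinite ∧ ∀ m' : Fin (a + 2), m < m' → {k | α k = m'}.Finite := by
  have window : ∀ i j, i ≤ j → (Finset.Icc (lam (h i)) (mu (h j))).sup α = m := fun i j hij => by
    rw [← hap.lam_adjSum hpos hij, ← hap.mu_adjSum hpos hij, ← hD]
    exact hhom i j hij
  constructor
  · refine Set.infinite_of_forall_exists_gt fun n => ?_
    obtain ⟨k, hk, hαk⟩ := Finset.exists_mem_eq_sup _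
      (Finset.nonempty_Icc.mpr (lam_le_mu (hpos (n + 1)).ne')) α
    have hnk : n + 1 ≤ k := (hap.le_lam hpos (n + 1)).trans (Finset.mem_Icc.mp hk).1
    exact ⟨k, (window _ _ le_rfl ▸ hαk).symm, hnk⟩
  · intro m' hm'
    refine (Set.finite_Iio (lam (h 0))).subset fun k (hk : α k = m') => Set.mem_Iio.mpr ?_
    by_contra! hle
    have hkμ : k ≤ mu (h k) := (hap.le_lam hpos k).trans (lam_le_mu (hpos k).ne')
    have : α k ≤ m := window 0 k k.zero_le ▸ Finset.le_sup (Finset.mem_Icc.mpr ⟨hle, hkμ⟩)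
    exact (hk ▸ this).not_gt hm'

theorem aht_gives_highest_letter (a : ℕ) (α : ℕ → Fin (a + 2))
    (D : ℕ → Fin (a + 2))
    (hD : ∀ n, D n = (Finset.Icc (lam n) (mu n)).sup α)
    (h : ℕ → ℕ) (hmono : StrictMono h) (hpos : ∀ i, 0 < h i) (hap : Apart h)
    (m : Fin (a + 2)) (hhom : ∀ i j, i ≤ j → D (adjSum h i j) = m) :
    {k | α k = m}.Infinite ∧ ∀ m' : Fin (a + 2), m < m' → {k | α k = m'}.Finite :=
  aht_gives_highest_letter_general a α D hD h hpos hap m hhom
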